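/- arXiv:1506.05551 — 4 statements merged into one kernel-verified Lean document; each statement's English description precedes it below -/
import Mathlib

section
/- Let (S, F, μ) be a probability space and X₁,…,Xₙ : S → ℝ be μ-integrable functions. Then the vector (∫ X₁ dμ, …, ∫ Xₙ dμ) ∈ ℝⁿ lies in the convex hull of the set X(S) = {(X₁(t),…,Xₙ(t)) : t ∈ S}. -/
/-!
Let `b = ∫ f` for `f` a.e. in a convex set `s` of a finite-dimensional space, and suppose `b ∉ s`.
If `s` has interior, a nonzero functional `g` weakly separates `b` from `s`; as `g ∘ f ≤ g b` a.e.
and `g ∘ f` has mean `g b`, `f` lies a.e. on the hyperplane `g = g b`. If `s` has empty interior,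
`f` lies a.e. in the proper affine span of `s`, which also contains `b`. Either way `f - b` takes
values a.e. in a proper subspace `K`, and induction on the dimension, applied in `K` to `f - b`,
gives `0 ∈ s - b`, a contradiction.
-/

open MeasureTheory Set

section

variable {S : Type*} [MeasurableSpace S] {μ : Measure S} [IsProbabilityMeasure μ]
  {E : Type*} [NormedAddCommGroup E] [NormedSpace ℝ E] {f : S → E}

theorem Convex.exists_dual_ne_zero_ae_eq_integral [CompleteSpace E] {s : Set E}
    (hs : Convex ℝ s) (hsint : (interior s).Nonempty) (hfs : ∀ᵐ t ∂μ, f t ∈ s)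
    (hfi : Integrable f μ) (hb : ∫ t, f t ∂μ ∉ s) :
    ∃ g : StrongDual ℝ E, g ≠ 0 ∧ ∀ᵐ t ∂μ, g (f t) = g (∫ t, f t ∂μ) := by
  obtain ⟨g, hg0, hgs⟩ :=
    geometric_hahn_banach_of_nonempty_interior_point hs (fun h => hb (interior_subset h)) hsint
  have hle : (fun t => g (f t)) ≤ᵐ[μ] fun _ => g (∫ t, f t ∂μ) := hfs.mono fun t ht => hgs _ ht
  have hmean : ∫ t, g (f t) ∂μ = ∫ _, g (∫ t, f t ∂μ) ∂μ := by
    simp [g.integral_comp_comm hfi]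
  exact ⟨g, hg0, (integral_eq_iff_of_ae_le (g.integrable_comp hfi) (integrable_const _) hle).1 hmean⟩

variable [FiniteDimensional ℝ E]

theorem ae_sub_integral_mem_direction_affineSpan {s : Set E} (hfs : ∀ᵐ t ∂μ, f t ∈ s)
    (hfi : Integrable f μ) :
    ∀ᵐ t ∂μ, f t - ∫ t, f t ∂μ ∈ (affineSpan ℝ s).direction := by
  have hfA : ∀ᵐ t ∂μ, f t ∈ affineSpan ℝ s := hfs.mono fun t ht => subset_affineSpan ℝ s ht
  have hbA : ∫ t, f t ∂μ ∈ affineSpan ℝ s :=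
    (affineSpan ℝ s).convex.integral_mem (affineSpan ℝ s).closed_of_finiteDimensional hfA hfi
  exact hfA.mono fun t ht => AffineSubspace.vsub_mem_direction ht hbA

theorem Convex.exists_ne_top_ae_sub_integral_mem {s : Set E} (hs : Convex ℝ s)
    (hfs : ∀ᵐ t ∂μ, f t ∈ s) (hfi : Integrable f μ) (hb : ∫ t, f t ∂μ ∉ s) :
    ∃ K : Submodule ℝ E, K ≠ ⊤ ∧ ∀ᵐ t ∂μ, f t - ∫ t, f t ∂μ ∈ K := by
  by_cases hsint : (interior s).Nonempty
  · obtain ⟨g, hg0, hg⟩ := hs.exists_dual_ne_zero_ae_eq_integral hsint hfs hfi hb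
    refine ⟨LinearMap.ker (g : E →ₗ[ℝ] ℝ), fun h => hg0 ?_, hg.mono fun t ht => ?_⟩
    · exact ContinuousLinearMap.coe_injective (LinearMap.ker_eq_top.1 h)
    · simp [ht]
  · refine ⟨(affineSpan ℝ s).direction, fun h => hsint ?_,
      ae_sub_integral_mem_direction_affineSpan hfs hfi⟩
    obtain ⟨t, hts⟩ := hfs.exists
    rw [hs.interior_nonempty_iff_affineSpan_eq_top]
    exact (AffineSubspace.direction_eq_top_iff_of_nonempty ⟨f t, subset_affineSpan ℝ s hts⟩).1 h

theorem MeasureTheory.Integrable.exists_submodule_lift_sub_integral {K : Submodule ℝ E}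
    (hfi : Integrable f μ) (hfK : ∀ᵐ t ∂μ, f t - ∫ t, f t ∂μ ∈ K) :
    ∃ g : S → K, Integrable g μ ∧ ∫ t, g t ∂μ = 0 ∧
      ∀ᵐ t ∂μ, (g t : E) = f t - ∫ t, f t ∂μ := by
  obtain ⟨P, hP⟩ := Submodule.ClosedComplemented.of_finiteDimensional K
  have hfb : Integrable (fun t => f t - ∫ t, f t ∂μ) μ := hfi.sub (integrable_const _)
  refine ⟨fun t => P (f t - ∫ t, f t ∂μ), P.integrable_comp hfb, ?_, hfK.mono fun t ht => ?_⟩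
  · rw [P.integral_comp_comm hfb, integral_sub hfi (integrable_const _)]
    simp
  · exact congrArg Subtype.val (hP ⟨_, ht⟩)

theorem Convex.integral_mem_of_finiteDimensional {s : Set E} (hs : Convex ℝ s)
    (hfs : ∀ᵐ t ∂μ, f t ∈ s) (hfi : Integrable f μ) : ∫ t, f t ∂μ ∈ s := by
  induction h : Module.finrank ℝ E using Nat.strong_induction_on generalizing E with
  | _ n ih =>
  by_contra hb
  obtain ⟨K, hK, hfK⟩ := hs.exists_ne_top_ae_sub_integral_mem hfs hfi hb
  obtain ⟨g, hgi, hg0, hgf⟩ := hfi.exists_submodule_lift_sub_integral hfK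
  have hsK : Convex ℝ {w : K | ∫ t, f t ∂μ + w ∈ s} :=
    (hs.translate_preimage_right _).linear_preimage K.subtype
  have hgs : ∀ᵐ t ∂μ, g t ∈ {w : K | ∫ t, f t ∂μ + w ∈ s} := by
    filter_upwards [hfs, hgf] with t hft hgt
    simpa [hgt] using hft
  exact hb (by simpa [hg0] using ih _ (h ▸ Submodule.finrank_lt hK) hsK hgs hgi rfl)

end

theorem integral_mem_convexHull (n : ℕ) (S : Type*) [MeasurableSpace S]
    (μ : Measure S) [IsProbabilityMeasure μ] (X : S → (Fin n → ℝ))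
    (hX : ∀ i, Integrable (fun t => X t i) μ) :
    (fun i => ∫ t, X t i ∂μ) ∈ convexHull ℝ (Set.range X) := by
  have hmean : (fun i => ∫ t, X t i ∂μ) = ∫ t, X t ∂μ := funext fun i => (eval_integral hX i).symm
  rw [hmean]
  exact (convex_convexHull ℝ _).integral_mem_of_finiteDimensional
    (ae_of_all _ fun t => subset_convexHull ℝ _ (mem_range_self t)) (Integrable.of_eval hX)
end

section
/- Under axioms A1 (E of a constant c equals c), A2 (linearity of E), and A3 (for X with E X = 0, either P(X=0)=1 or X takes both a strictly positive and a strictly negative value), the functional E is positive: if X(s) ≥ 0 for all s, then E X ≥ 0. -/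
/-- Indicator function of a set, with value 1. -/
noncomputable def ind {S : Type*} (B : Set S) : S → ℝ := Set.indicator B (fun _ => 1)

/-- The set function `P(B) = E(1_B)` derived from the functional `E`. -/
noncomputable def Pfun {S : Type*} (E : (S → ℝ) → ℝ) (B : Set S) : ℝ := E (ind B)

/-- `F` is an algebra of subsets of `S`. -/
def IsSetAlgebra' {S : Type*} (F : Set (Set S)) : Prop :=
  Set.univ ∈ F ∧ (∀ B ∈ F, Bᶜ ∈ F) ∧ ∀ A ∈ F, ∀ B ∈ F, A ∪ B ∈ F

/-- C1: the function space is closed under linear combinations. -/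
def CondC1 {S : Type*} (Sp : Set (S → ℝ)) : Prop :=
  ∀ X ∈ Sp, ∀ Y ∈ Sp, ∀ a b : ℝ, (fun s => a * X s + b * Y s) ∈ Sp

/-- C2: indicators of sets in `F` belong to the function space. -/
def CondC2 {S : Type*} (F : Set (Set S)) (Sp : Set (S → ℝ)) : Prop :=
  ∀ B ∈ F, ind B ∈ Sp

/-- C3: preimages of intervals under members of the space belong to `F`. -/
def CondC3 {S : Type*} (F : Set (Set S)) (Sp : Set (S → ℝ)) : Prop :=
  ∀ X ∈ Sp, ∀ J : Set ℝ, J.OrdConnected → {s | X s ∈ J} ∈ F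

/-- C4: truncation closure for nonnegative functions. -/
def CondC4 {S : Type*} (Sp : Set (S → ℝ)) : Prop :=
  ∀ X ∈ Sp, (∀ s, 0 ≤ X s) → ∀ J : Set ℝ, J.OrdConnected →
    (fun s => X s * ind {t | X t ∈ J} s) ∈ Sp

/-- C5: null-set condition. -/
def CondC5 {S : Type*} (F : Set (Set S)) (Sp : Set (S → ℝ)) (E : (S → ℝ) → ℝ) : Prop :=
  ∀ X ∈ Sp, ∀ N ∈ F, Pfun E N = 0 →
    (fun s => X s * ind N s) ∈ Sp ∧ E (fun s => X s * ind N s) = 0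

/-- A1: `E` of a constant equals that constant. -/
def AxA1 {S : Type*} (E : (S → ℝ) → ℝ) : Prop := ∀ c : ℝ, E (fun _ => c) = c

/-- A2: linearity of `E` on the function space. -/
def AxA2 {S : Type*} (Sp : Set (S → ℝ)) (E : (S → ℝ) → ℝ) : Prop :=
  ∀ X ∈ Sp, ∀ Y ∈ Sp, ∀ a b : ℝ, E (fun s => a * X s + b * Y s) = a * E X + b * E Y

/-- A3: if `E X = 0` then either `P(X = 0) = 1` or `X` changes sign. -/
def AxA3 {S : Type*} (Sp : Set (S → ℝ)) (E : (S → ℝ) → ℝ) : Prop :=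
  ∀ X ∈ Sp, E X = 0 → Pfun E {s | X s = 0} = 1 ∨ ∃ s₁ s₂, X s₁ * X s₂ < 0

/-- A3': if `X ≥ 0` everywhere and `E X = 0` then `P(X = 0) = 1`. -/
def AxA3' {S : Type*} (Sp : Set (S → ℝ)) (E : (S → ℝ) → ℝ) : Prop :=
  ∀ X ∈ Sp, (∀ s, 0 ≤ X s) → E X = 0 → Pfun E {s | X s = 0} = 1

theorem ind_empty {S : Type*} : ind (∅ : Set S) = fun _ => 0 := by
  funext s
  simp [ind]

theorem ind_univ {S : Type*} : ind (Set.univ : Set S) = fun _ => 1 := by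
  funext s
  simp [ind]

theorem Pfun_empty {S : Type*} {E : (S → ℝ) → ℝ} (hA1 : AxA1 E) : Pfun E ∅ = 0 := by
  rw [Pfun, ind_empty, hA1]

theorem CondC1.sub_const_mem {S : Type*} {Sp : Set (S → ℝ)} (hC1 : CondC1 Sp)
    (h1 : (fun _ => (1 : ℝ)) ∈ Sp) {X : S → ℝ} (hX : X ∈ Sp) (c : ℝ) :
    (fun s => X s - c) ∈ Sp := by
  convert hC1 X hX _ h1 1 (-c) using 1
  funext s
  ring

theorem AxA2.map_sub_const {S : Type*} {Sp : Set (S → ℝ)} {E : (S → ℝ) → ℝ}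
    (hA1 : AxA1 E) (hA2 : AxA2 Sp E) (h1 : (fun _ => (1 : ℝ)) ∈ Sp)
    {X : S → ℝ} (hX : X ∈ Sp) (c : ℝ) :
    E (fun s => X s - c) = E X - c := by
  have h := hA2 X hX _ h1 1 (-c)
  rw [hA1] at h
  convert h using 1
  · congr 1
    funext s
    ring
  · ring

theorem AxA3.ne_zero_of_pos {S : Type*} {Sp : Set (S → ℝ)} {E : (S → ℝ) → ℝ}
    (hA1 : AxA1 E) (hA3 : AxA3 Sp E) {X : S → ℝ} (hX : X ∈ Sp) (hpos : ∀ s, 0 < X s) :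
    E X ≠ 0 := by
  intro hEX
  rcases hA3 X hX hEX with hP | ⟨s₁, s₂, hneg⟩
  · have hzero : {s | X s = 0} = ∅ := Set.eq_empty_of_forall_notMem fun s => (hpos s).ne'
    rw [hzero, Pfun_empty hA1] at hP
    exact zero_ne_one hP
  · exact (mul_pos (hpos s₁) (hpos s₂)).not_gt hneg

theorem E_positivity_general (S : Type*)
    (F : Set (Set S)) (Sp : Set (S → ℝ)) (E : (S → ℝ) → ℝ)
    (hF : IsSetAlgebra' F) (hC1 : CondC1 Sp) (hC2 : CondC2 F Sp)
    (hA1 : AxA1 E) (hA2 : AxA2 Sp E) (hA3 : AxA3 Sp E) :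
    ∀ X ∈ Sp, (∀ s, 0 ≤ X s) → 0 ≤ E X := by
  intro X hX hnonneg
  by_contra! hneg
  have h1 : (fun _ => (1 : ℝ)) ∈ Sp := ind_univ (S := S) ▸ hC2 _ hF.1
  -- `X - E X` is strictly positive yet has expectation `0`.
  refine hA3.ne_zero_of_pos hA1 (hC1.sub_const_mem h1 hX (E X)) (fun s => ?_) ?_
  · linarith [hnonneg s]
  · rw [hA2.map_sub_const hA1 h1 hX, sub_self]

/-- Lemma 2.2 (positivity): under A1, A2, A3, if `X ≥ 0` everywhere then `E X ≥ 0`. -/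
theorem E_positivity (S : Type*) [Nonempty S]
    (F : Set (Set S)) (Sp : Set (S → ℝ)) (E : (S → ℝ) → ℝ)
    (hF : IsSetAlgebra' F) (hC1 : CondC1 Sp) (hC2 : CondC2 F Sp)
    (hA1 : AxA1 E) (hA2 : AxA2 Sp E) (hA3 : AxA3 Sp E) :
    ∀ X ∈ Sp, (∀ s, 0 ≤ X s) → 0 ≤ E X :=
  E_positivity_general S F Sp E hF hC1 hC2 hA1 hA2 hA3
end

section
/- If P is a strongly finitely additive probability on (S,F), i.e., there exist countably many disjoint sets H₁,H₂,… ∈ F with ⋃ H_i = S and P(H_i) = 0 for all i, then axiom A3' fails for any positive linear functional E extending integration against P: the function X defined by X(s) = 1/i for s ∈ H_i satisfies X > 0 everywhere yet E X = 0. -/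
open Filter Topology Finset

lemma ind_nonneg {S : Type*} (B : Set S) : 0 ≤ ind B :=
  Set.indicator_nonneg fun _ _ => zero_le_one

lemma ind_of_mem {S : Type*} {B : Set S} {s : S} (hs : s ∈ B) : ind B s = 1 :=
  Set.indicator_of_mem hs _

theorem PositiveLinearMap.map_nonpos_of_le_add_const {S : Type*} (L : (S → ℝ) →ₚ[ℝ] ℝ)
    {X : S → ℝ} {W : ℕ → S → ℝ} {ε : ℕ → ℝ} (hε : Tendsto ε atTop (𝓝 0))
    (hW : ∀ k, L (W k) = 0) (hle : ∀ k, X ≤ W k + ε k • 1) : L X ≤ 0 := by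
  have hbound : ∀ k, L X ≤ ε k * L 1 := fun k => by
    simpa [hW, map_add, map_smul] using L.monotone' (hle k)
  have hlim : Tendsto (fun k => ε k * L 1) atTop (𝓝 0) := by
    simpa using hε.mul_const (L 1)
  exact ge_of_tendsto' hlim hbound

theorem PositiveLinearMap.map_sum_smul_ind_eq_zero {S : Type*} (L : (S → ℝ) →ₚ[ℝ] ℝ)
    {H : ℕ → Set S} (hH : ∀ i, L (ind (H i)) = 0) (a : ℕ → ℝ) (k : ℕ) :
    L (∑ i ∈ range k, a i • ind (H i)) = 0 := by
  simp [map_sum, map_smul, hH]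

theorem le_sum_smul_ind_add_const {S : Type*} {H : ℕ → Set S} (hH : ⋃ i, H i = Set.univ)
    {a : ℕ → ℝ} (ha : Antitone a) (ha0 : ∀ i, 0 ≤ a i) {X : S → ℝ}
    (hX : ∀ i, ∀ s ∈ H i, X s = a i) (k : ℕ) :
    X ≤ ∑ i ∈ range k, a i • ind (H i) + a k • 1 := by
  intro s
  obtain ⟨j, hj⟩ := Set.mem_iUnion.mp (hH ▸ Set.mem_univ s)
  have hterm : ∀ i, 0 ≤ a i * ind (H i) s := fun i => mul_nonneg (ha0 i) (ind_nonneg _ s)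
  have hsum : 0 ≤ ∑ i ∈ range k, a i * ind (H i) s := sum_nonneg fun i _ => hterm i
  simp only [Pi.add_apply, Finset.sum_apply, Pi.smul_apply, smul_eq_mul, Pi.one_apply, mul_one,
    hX j s hj]
  rcases lt_or_ge j k with hjk | hkj
  · have := single_le_sum (fun i _ => hterm i) (mem_range.mpr hjk)
    rw [ind_of_mem hj, mul_one] at this
    linarith [ha0 k]
  · linarith [ha hkj]

theorem sfap_fails_A3_general (S : Type*)
    (E : (S → ℝ) → ℝ)
    (H : ℕ → Set S)
    (hHcover : (⋃ i, H i) = Set.univ)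
    (hHnull : ∀ i, Pfun E (H i) = 0)
    (hEadd : ∀ Y Z : S → ℝ, E (fun s => Y s + Z s) = E Y + E Z)
    (hEsmul : ∀ (a : ℝ) (Y : S → ℝ), E (fun s => a * Y s) = a * E Y)
    (hpos : ∀ Y : S → ℝ, (∀ s, 0 ≤ Y s) → 0 ≤ E Y)
    (X : S → ℝ) (hX : ∀ i, ∀ s ∈ H i, X s = 1 / ((i : ℝ) + 1)) :
    (∀ s, 0 < X s) ∧ E X = 0 := by
  let L : (S → ℝ) →ₚ[ℝ] ℝ := .mk₀ ⟨⟨E, hEadd⟩, hEsmul⟩ hpos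
  have hXpos : ∀ s, 0 < X s := fun s => by
    obtain ⟨i, hi⟩ := Set.mem_iUnion.mp (hHcover ▸ Set.mem_univ s)
    rw [hX i s hi]
    positivity
  have ha : Antitone fun i : ℕ => 1 / ((i : ℝ) + 1) := fun i j hij => by
    dsimp only
    gcongr
  refine ⟨hXpos, le_antisymm ?_ (hpos X fun s => (hXpos s).le)⟩
  exact L.map_nonpos_of_le_add_const tendsto_one_div_add_atTop_nhds_zero_nat
    (fun k => L.map_sum_smul_ind_eq_zero hHnull _ k)
    (le_sum_smul_ind_add_const hHcover ha (fun i => by positivity) hX)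

/-- Lemma 2.8: if `P` is a strongly finitely additive probability, witnessed by a
countable partition `H` of `S` into `P`-null sets in `F`, then axiom A3' fails for any
positive linear functional `E` extending integration against `P`: the function
`X(s) = 1/i` for `s ∈ H i` is everywhere strictly positive yet `E X = 0`. -/
theorem sfap_fails_A3 (S : Type*) [Nonempty S]
    (F : Set (Set S)) (E : (S → ℝ) → ℝ)
    (hF : IsSetAlgebra' F)
    (H : ℕ → Set S) (hHF : ∀ i, H i ∈ F)
    (hHdisj : Pairwise (Function.onFun Disjoint H))
    (hHcover : (⋃ i, H i) = Set.univ)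
    (hHnull : ∀ i, Pfun E (H i) = 0)
    (hEadd : ∀ Y Z : S → ℝ, E (fun s => Y s + Z s) = E Y + E Z)
    (hEsmul : ∀ (a : ℝ) (Y : S → ℝ), E (fun s => a * Y s) = a * E Y)
    (hpos : ∀ Y : S → ℝ, (∀ s, 0 ≤ Y s) → 0 ≤ E Y)
    (X : S → ℝ) (hX : ∀ i, ∀ s ∈ H i, X s = 1 / ((i : ℝ) + 1)) :
    (∀ s, 0 < X s) ∧ E X = 0 :=
  sfap_fails_A3_general S E H hHcover hHnull hEadd hEsmul hpos X hX
end

section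
/- Let E be a functional on ℝⁿ-valued functions X = (X₁,…,Xₙ) on a set S given componentwise by a scalar functional satisfying axioms A1, A2, A3' and conditions C1-C5. Then the vector E X = (E X₁, …, E Xₙ) belongs to the convex hull of X(S) = {X(t) : t ∈ S} ⊆ ℝⁿ. -/
/-!
Write `v = (E X₁, …, E Xₙ)` and descend through sets `T ∈ F` with `P(T) = 1`, starting from
`T = S`, along the span of `X(T) - v`. If `v ∉ conv X(T)`, proper separation in finite
dimension gives a linear `Φ` with `Φ v ≤ Φ (X t)` on `T`, strictly at some `t ∈ T`. The
variable `(Φ ∘ X - Φ v) · 1_T` is nonnegative and, `Tᶜ` being null, has expectation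
`Φ v - Φ v = 0`; by A3' it vanishes on a set `T' ⊆ T` of probability one. Then `X(T') - v`
lies in `ker Φ`, so its span is strictly smaller, and the descent terminates.
-/

open Set Pointwise

section Separation

variable {W : Type*} [NormedAddCommGroup W] [NormedSpace ℝ W] [FiniteDimensional ℝ W]

theorem exists_dual_nonneg_pos_of_zero_notMem_convexHull {s : Set W} (hne : s.Nonempty)
    (hspan : Submodule.span ℝ s = ⊤) (h0 : (0 : W) ∉ convexHull ℝ s) :
    ∃ f : StrongDual ℝ W, (∀ x ∈ s, 0 ≤ f x) ∧ ∃ x ∈ s, 0 < f x := by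
  have hD := convex_convexHull ℝ s
  obtain ⟨f, hf, hfs⟩ : ∃ f : StrongDual ℝ W, f ≠ 0 ∧ ∀ x ∈ s, 0 ≤ f x := by
    by_cases h0D : (0 : W) ∈ closure (convexHull ℝ s)
    · have h0aff : (0 : W) ∈ affineSpan ℝ s := by
        rw [← affineSpan_convexHull]
        exact (affineSpan ℝ _).closed_of_finiteDimensional.closure_subset_iff.2
          (subset_affineSpan ℝ _) h0D
      -- as `0 ∈ affineSpan ℝ s`, the direction of that affine span contains `s`
      have hdir : (affineSpan ℝ s).direction = ⊤ := by
        rw [eq_top_iff, ← hspan, Submodule.span_le]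
        intro x hx
        simpa using AffineSubspace.vsub_mem_direction (subset_affineSpan ℝ s hx) h0aff
      have hint : (interior (convexHull ℝ s)).Nonempty := by
        rw [hD.interior_nonempty_iff_affineSpan_eq_top, affineSpan_convexHull]
        exact (AffineSubspace.direction_eq_top_iff_of_nonempty ⟨0, h0aff⟩).1 hdir
      obtain ⟨f, hf, hfD⟩ := geometric_hahn_banach_of_nonempty_interior_point hD
        (fun h => h0 (interior_subset h)) hint
      exact ⟨-f, neg_ne_zero.2 hf, fun x hx => by simpa using hfD x (subset_convexHull ℝ s hx)⟩
    · obtain ⟨f, u, hf0, hfD⟩ :=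
        geometric_hahn_banach_point_closed hD.closure isClosed_closure h0D
      have hpos : ∀ x ∈ s, 0 < f x := fun x hx => by
        simpa using hf0.trans (hfD x (subset_closure (subset_convexHull ℝ s hx)))
      obtain ⟨x, hx⟩ := hne
      exact ⟨f, fun h => by simpa [h] using hpos x hx, fun x hx => (hpos x hx).le⟩
  refine ⟨f, hfs, ?_⟩
  by_contra! hle
  exact hf (ContinuousLinearMap.coe_injective (LinearMap.ext_on hspan fun x hx => by
    simpa using le_antisymm (hle x hx) (hfs x hx)))

theorem exists_linearMap_nonneg_pos_of_zero_notMem_convexHull {t : Set W} (hne : t.Nonempty)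
    (h0 : (0 : W) ∉ convexHull ℝ t) :
    ∃ Φ : W →ₗ[ℝ] ℝ, (∀ x ∈ t, 0 ≤ Φ x) ∧ ∃ x ∈ t, 0 < Φ x := by
  set V := Submodule.span ℝ t
  have himage : ((↑) : V → W) '' ((↑) ⁻¹' t) = t :=
    image_preimage_eq_of_subset fun x hx => ⟨⟨x, Submodule.subset_span hx⟩, rfl⟩
  have hne' : ((↑) ⁻¹' t : Set V).Nonempty := by
    obtain ⟨y, hy⟩ := hne
    exact ⟨⟨y, Submodule.subset_span hy⟩, hy⟩
  have h0' : (0 : V) ∉ convexHull ℝ ((↑) ⁻¹' t) := fun h => h0 <| by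
    have := mem_image_of_mem V.subtype h
    rwa [LinearMap.image_convexHull, Submodule.coe_subtype, himage] at this
  obtain ⟨f, hf, x, hx, hfx⟩ := exists_dual_nonneg_pos_of_zero_notMem_convexHull hne'
    Submodule.span_span_coe_preimage h0'
  obtain ⟨Φ, hΦ⟩ := LinearMap.exists_extend (f : V →ₗ[ℝ] ℝ)
  have hΦf (y : V) : Φ y = f y := LinearMap.congr_fun hΦ y
  exact ⟨Φ, fun y hy => (hΦf ⟨y, Submodule.subset_span hy⟩).symm ▸ hf _ hy,
    x, hx, by rwa [hΦf]⟩

theorem exists_linearMap_le_lt_of_notMem_convexHull {s : Set W} {v : W} (hne : s.Nonempty)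
    (hv : v ∉ convexHull ℝ s) :
    ∃ Φ : W →ₗ[ℝ] ℝ, (∀ x ∈ s, Φ v ≤ Φ x) ∧ ∃ x ∈ s, Φ v < Φ x := by
  have h0 : (0 : W) ∉ convexHull ℝ (-v +ᵥ s) := by
    rw [convexHull_vadd, ← neg_add_cancel v]
    exact fun h => hv (vadd_mem_vadd_set_iff.1 h)
  obtain ⟨Φ, hΦ, _, ⟨x, hx, rfl⟩, hΦx⟩ :=
    exists_linearMap_nonneg_pos_of_zero_notMem_convexHull hne.vadd_set h0
  refine ⟨Φ, fun y hy => ?_, x, hx, ?_⟩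
  · simpa using hΦ _ (vadd_mem_vadd_set hy)
  · simpa using hΦx

end Separation

theorem Submodule.span_lt_span_of_subset_of_notMem {R M : Type*} [Semiring R]
    [AddCommMonoid M] [Module R M] {A B : Set M} {p : Submodule R M} (hAB : A ⊆ B)
    (hAp : A ⊆ p) {b : M} (hb : b ∈ B) (hbp : b ∉ p) : span R A < span R B :=
  lt_of_le_of_ne (span_mono hAB) fun h => hbp <| span_le.2 hAp (h ▸ subset_span hb)

section Expectation

variable {S : Type*} {F : Set (Set S)} {Sp : Set (S → ℝ)} {E : (S → ℝ) → ℝ}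

theorem IsSetAlgebra'.inter_mem (hF : IsSetAlgebra' F) {A B : Set S} (hA : A ∈ F)
    (hB : B ∈ F) : A ∩ B ∈ F := by
  simpa [compl_union] using hF.2.1 _ (hF.2.2 _ (hF.2.1 A hA) _ (hF.2.1 B hB))

theorem Pfun_univ (hA1 : AxA1 E) : Pfun E (univ : Set S) = 1 := by
  simpa [Pfun, ind] using hA1 1

theorem nonempty_of_Pfun_eq_one (hA1 : AxA1 E) {T : Set S} (hT : Pfun E T = 1) :
    T.Nonempty := by
  rw [nonempty_iff_ne_empty]
  rintro rfl
  simp [Pfun, ind, hA1 0] at hT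

theorem sub_const_mem_and_E_eq (hF : IsSetAlgebra' F) (hC1 : CondC1 Sp) (hC2 : CondC2 F Sp)
    (hA1 : AxA1 E) (hA2 : AxA2 Sp E) {Y : S → ℝ} (hY : Y ∈ Sp) (c : ℝ) :
    (fun t => Y t - c) ∈ Sp ∧ E (fun t => Y t - c) = E Y - c := by
  have heq : (fun t => Y t - c) = fun t => 1 * Y t + (-c) * ind univ t := by
    funext t
    simp [ind, sub_eq_add_neg]
  rw [heq]
  exact ⟨hC1 _ hY _ (hC2 _ hF.1) _ _,
    by rw [hA2 _ hY _ (hC2 _ hF.1), show E (ind univ) = 1 from Pfun_univ hA1]; ring⟩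

theorem Pfun_compl (hF : IsSetAlgebra' F) (hC2 : CondC2 F Sp) (hA1 : AxA1 E)
    (hA2 : AxA2 Sp E) {B : Set S} (hB : B ∈ F) : Pfun E Bᶜ = 1 - Pfun E B := by
  have heq : ind Bᶜ = fun t => 1 * ind univ t + (-1) * ind B t := by
    funext t
    by_cases ht : t ∈ B <;> simp [ind, ht]
  show E (ind Bᶜ) = 1 - E (ind B)
  rw [heq, hA2 _ (hC2 _ hF.1) _ (hC2 _ hB), show E (ind univ) = 1 from Pfun_univ hA1]
  ring

theorem mul_ind_mem_and_E_eq (hF : IsSetAlgebra' F) (hC1 : CondC1 Sp) (hC2 : CondC2 F Sp)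
    (hC5 : CondC5 F Sp E) (hA1 : AxA1 E) (hA2 : AxA2 Sp E) {T : Set S} (hT : T ∈ F)
    (hPT : Pfun E T = 1) {Y : S → ℝ} (hY : Y ∈ Sp) :
    (fun t => Y t * ind T t) ∈ Sp ∧ E (fun t => Y t * ind T t) = E Y := by
  obtain ⟨hmem, hE⟩ := hC5 Y hY Tᶜ (hF.2.1 T hT)
    (by rw [Pfun_compl hF hC2 hA1 hA2 hT, hPT, sub_self])
  have heq : (fun t => Y t * ind T t) = fun t => 1 * Y t + (-1) * (Y t * ind Tᶜ t) := by
    funext t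
    by_cases ht : t ∈ T <;> simp [ind, ht]
  rw [heq]
  exact ⟨hC1 _ hY _ hmem _ _, by rw [hA2 _ hY _ hmem, hE]; ring⟩

theorem Pfun_inter_eq_one (hF : IsSetAlgebra' F) (hC1 : CondC1 Sp) (hC2 : CondC2 F Sp)
    (hC5 : CondC5 F Sp E) (hA1 : AxA1 E) (hA2 : AxA2 Sp E) {A B : Set S} (hA : A ∈ F)
    (hB : B ∈ F) (hPA : Pfun E A = 1) (hPB : Pfun E B = 1) : Pfun E (A ∩ B) = 1 := by
  have heq : ind (A ∩ B) = fun t => ind A t * ind B t := by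
    funext t
    by_cases htA : t ∈ A <;> by_cases htB : t ∈ B <;> simp [ind, htA, htB]
  show E (ind (A ∩ B)) = 1
  rw [heq, (mul_ind_mem_and_E_eq hF hC1 hC2 hC5 hA1 hA2 hB hPB (hC2 A hA)).2]
  exact hPA

theorem sum_mul_mem_and_E_eq {ι : Type*} (hF : IsSetAlgebra' F) (hC1 : CondC1 Sp)
    (hC2 : CondC2 F Sp) (hA1 : AxA1 E) (hA2 : AxA2 Sp E) {Y : ι → S → ℝ}
    (hY : ∀ i, Y i ∈ Sp) (c : ι → ℝ) (s : Finset ι) :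
    (fun t => ∑ i ∈ s, c i * Y i t) ∈ Sp ∧
      E (fun t => ∑ i ∈ s, c i * Y i t) = ∑ i ∈ s, c i * E (Y i) := by
  induction s using Finset.cons_induction with
  | empty =>
    simp only [Finset.sum_empty]
    exact ⟨by simpa using hC1 _ (hC2 _ hF.1) _ (hC2 _ hF.1) 0 0, hA1 0⟩
  | cons a s ha ih =>
    simp only [Finset.sum_cons]
    refine ⟨by simpa using hC1 _ (hY a) _ ih.1 (c a) 1, ?_⟩
    simpa [ih.2] using hA2 _ (hY a) _ ih.1 (c a) 1

theorem linearMap_comp_mem_and_E_eq {ι : Type*} [Fintype ι] (hF : IsSetAlgebra' F)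
    (hC1 : CondC1 Sp) (hC2 : CondC2 F Sp) (hA1 : AxA1 E) (hA2 : AxA2 Sp E) {Y : ι → S → ℝ}
    (hY : ∀ i, Y i ∈ Sp) (Φ : (ι → ℝ) →ₗ[ℝ] ℝ) :
    (fun t => Φ (fun i => Y i t)) ∈ Sp ∧
      E (fun t => Φ (fun i => Y i t)) = Φ (fun i => E (Y i)) := by
  classical
  obtain ⟨c, hc⟩ : ∃ c : ι → ℝ, ∀ y, Φ y = ∑ i, c i * y i :=
    ⟨fun i => Φ fun j => if i = j then 1 else 0, fun y => by
      simp only [Φ.pi_apply_eq_sum_univ y, smul_eq_mul, mul_comm]⟩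
  simp only [hc]
  exact sum_mul_mem_and_E_eq hF hC1 hC2 hA1 hA2 hY c Finset.univ

theorem inter_setOf_eq_zero_mem_and_Pfun_eq_one (hF : IsSetAlgebra' F) (hC1 : CondC1 Sp)
    (hC2 : CondC2 F Sp) (hC3 : CondC3 F Sp) (hC5 : CondC5 F Sp E) (hA1 : AxA1 E)
    (hA2 : AxA2 Sp E) (hA3' : AxA3' Sp E) {T : Set S} (hT : T ∈ F) (hPT : Pfun E T = 1)
    {Y : S → ℝ} (hY : Y ∈ Sp) (hYT : ∀ t ∈ T, 0 ≤ Y t) (hEY : E Y = 0) :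
    T ∩ {t | Y t = 0} ∈ F ∧ Pfun E (T ∩ {t | Y t = 0}) = 1 := by
  obtain ⟨hYT_mem, hEYT⟩ := mul_ind_mem_and_E_eq hF hC1 hC2 hC5 hA1 hA2 hT hPT hY
  have hnonneg (t : S) : 0 ≤ Y t * ind T t := by
    by_cases ht : t ∈ T <;> simp [ind, ht, hYT]
  have hZ : {t | Y t * ind T t = 0} ∈ F := by
    simpa using hC3 _ hYT_mem {0} ordConnected_singleton
  have hPZ := hA3' _ hYT_mem hnonneg (hEYT.trans hEY)
  have heq : T ∩ {t | Y t * ind T t = 0} = T ∩ {t | Y t = 0} := by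
    ext t
    by_cases ht : t ∈ T <;> simp [ind, ht]
  rw [← heq]
  exact ⟨hF.inter_mem hT hZ, Pfun_inter_eq_one hF hC1 hC2 hC5 hA1 hA2 hT hZ hPT hPZ⟩

theorem exists_subset_Pfun_eq_one_span_lt {ι : Type*} [Fintype ι] (hF : IsSetAlgebra' F)
    (hC1 : CondC1 Sp) (hC2 : CondC2 F Sp) (hC3 : CondC3 F Sp) (hC5 : CondC5 F Sp E)
    (hA1 : AxA1 E) (hA2 : AxA2 Sp E) (hA3' : AxA3' Sp E) {X : ι → S → ℝ}
    (hX : ∀ i, X i ∈ Sp) {T : Set S} (hT : T ∈ F) (hPT : Pfun E T = 1)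
    (hv : (fun i => E (X i)) ∉ convexHull ℝ ((fun t i => X i t) '' T)) :
    ∃ T' ∈ F, T' ⊆ T ∧ Pfun E T' = 1 ∧
      Submodule.span ℝ ((fun t i => X i t - E (X i)) '' T') <
        Submodule.span ℝ ((fun t i => X i t - E (X i)) '' T) := by
  obtain ⟨Φ, hΦ, _, ⟨t₁, ht₁, rfl⟩, hΦt₁⟩ := exists_linearMap_le_lt_of_notMem_convexHull
    ((nonempty_of_Pfun_eq_one hA1 hPT).image fun t i => X i t) hv
  have hΦsub (t : S) :
      Φ (fun i => X i t - E (X i)) = Φ (fun i => X i t) - Φ fun i => E (X i) :=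
    map_sub Φ (fun i => X i t) fun i => E (X i)
  obtain ⟨hΦX, hEΦX⟩ := linearMap_comp_mem_and_E_eq hF hC1 hC2 hA1 hA2 hX Φ
  obtain ⟨hZ, hEZ⟩ := sub_const_mem_and_E_eq hF hC1 hC2 hA1 hA2 hΦX (Φ fun i => E (X i))
  obtain ⟨hT'F, hPT'⟩ := inter_setOf_eq_zero_mem_and_Pfun_eq_one hF hC1 hC2 hC3 hC5 hA1 hA2 hA3'
    hT hPT hZ (fun t ht => sub_nonneg.2 (hΦ _ ⟨t, ht, rfl⟩)) (by rw [hEZ, hEΦX, sub_self])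
  refine ⟨_, hT'F, inter_subset_left, hPT',
    Submodule.span_lt_span_of_subset_of_notMem (p := LinearMap.ker Φ)
      (image_mono inter_subset_left) ?_ (mem_image_of_mem _ ht₁) ?_⟩
  · rintro _ ⟨t, ⟨-, ht⟩, rfl⟩
    rw [SetLike.mem_coe, LinearMap.mem_ker, hΦsub]
    exact ht
  · rw [LinearMap.mem_ker, hΦsub, sub_eq_zero]
    exact hΦt₁.ne'

end Expectation

theorem E_mem_convexHull_general (n : ℕ) (S : Type*)
    (F : Set (Set S)) (Sp : Set (S → ℝ)) (E : (S → ℝ) → ℝ)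
    (hF : IsSetAlgebra' F) (hC1 : CondC1 Sp) (hC2 : CondC2 F Sp)
    (hC3 : CondC3 F Sp) (hC5 : CondC5 F Sp E)
    (hA1 : AxA1 E) (hA2 : AxA2 Sp E) (hA3' : AxA3' Sp E)
    (X : Fin n → (S → ℝ)) (hX : ∀ i, X i ∈ Sp) :
    (fun i => E (X i)) ∈ convexHull ℝ (Set.range (fun t => fun i => X i t)) := by
  have key : ∀ T ∈ F, Pfun E T = 1 →
      (fun i => E (X i)) ∈ convexHull ℝ ((fun t i => X i t) '' T) := by
    intro T
    induction T using (InvImage.wf (fun T => Submodule.span ℝ ((fun t i => X i t - E (X i)) '' T))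
      wellFounded_lt).induction with
    | _ T ih =>
      intro hT hPT
      by_contra hv
      obtain ⟨T', hT', hT'T, hPT', hlt⟩ :=
        exists_subset_Pfun_eq_one_span_lt hF hC1 hC2 hC3 hC5 hA1 hA2 hA3' hX hT hPT hv
      exact hv (convexHull_mono (image_mono hT'T) (ih T' hlt hT' hPT'))
  simpa using key univ hF.1 (Pfun_univ hA1)

/-- Theorem 2.9: under axioms A1, A2, A3' and conditions C1-C5, the vector
`(E X₁, …, E Xₙ)` belongs to the convex hull of `X(S) ⊆ ℝⁿ`. -/
theorem E_mem_convexHull (n : ℕ) (S : Type*) [Nonempty S]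
    (F : Set (Set S)) (Sp : Set (S → ℝ)) (E : (S → ℝ) → ℝ)
    (hF : IsSetAlgebra' F) (hC1 : CondC1 Sp) (hC2 : CondC2 F Sp)
    (hC3 : CondC3 F Sp) (hC4 : CondC4 Sp) (hC5 : CondC5 F Sp E)
    (hA1 : AxA1 E) (hA2 : AxA2 Sp E) (hA3' : AxA3' Sp E)
    (X : Fin n → (S → ℝ)) (hX : ∀ i, X i ∈ Sp) :
    (fun i => E (X i)) ∈ convexHull ℝ (Set.range (fun t => fun i => X i t)) :=
  E_mem_convexHull_general n S F Sp E hF hC1 hC2 hC3 hC5 hA1 hA2 hA3' X hX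
end
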